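/- arXiv:1604.03161 — 3 statements merged into one kernel-verified Lean document; each statement's English description precedes it below -/
import Mathlib

section
/- Let L_A and L_B be disjoint subsets of ℝ^d whose union L = L_A ∪ L_B has distinct distances and no infinite descending chains, and let M be the unique stable two-color matching of (L_A, L_B). In the colored friendly frogs game on colored points, a position (x,y) (with x and y in different sets, y the frog of the player about to move) is a P-position if and only if x desires y, i.e., |x − y| ≤ |x − M(x)|. -/
noncomputable section

/-- Points of `ℝ^d` with the Euclidean norm. -/
abbrev Pt (d : ℕ) := EuclideanSpace ℝ (Fin d)

/-- `L` has all pairwise distances distinct: the distance determines the unordered pair. -/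
def DistinctDist {d : ℕ} (L : Set (Pt d)) : Prop :=
  ∀ x ∈ L, ∀ y ∈ L, ∀ z ∈ L, ∀ w ∈ L,
    x ≠ y → z ≠ w → dist x y = dist z w → (x = z ∧ y = w) ∨ (x = w ∧ y = z)

/-- `L` has no infinite descending chains: no sequence of points of `L` whose consecutive
distances are strictly decreasing. -/
def NoDescChain {d : ℕ} (L : Set (Pt d)) : Prop :=
  ¬ ∃ c : ℕ → Pt d, (∀ n, c n ∈ L) ∧ StrictAnti (fun n => dist (c n) (c (n + 1)))

/-- `R` encodes a two-color matching of the disjoint sets `(A, B)`: `R x y` means the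
amber point `x ∈ A` is matched to the blue point `y ∈ B`, and each point lies in at most
one pair. -/
def IsTCMatching {d : ℕ} (A B : Set (Pt d)) (R : Pt d → Pt d → Prop) : Prop :=
  (∀ x y, R x y → x ∈ A ∧ y ∈ B) ∧
  (∀ x y y', R x y → R x y' → y = y') ∧
  (∀ x x' y, R x y → R x' y → x = x')

/-- The two-color matching `R` of `(A, B)` is stable: there are no `x ∈ A` and `y ∈ B`, not
matched to each other, each of which is unmatched or strictly farther from its partner
than from the other point. -/
def IsTCStable {d : ℕ} (A B : Set (Pt d)) (R : Pt d → Pt d → Prop) : Prop :=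
  ¬ ∃ x ∈ A, ∃ y ∈ B, ¬ R x y ∧
    (∀ z, R x z → dist x y < dist x z) ∧ (∀ z, R z y → dist x y < dist z y)

/-- The move relation of colored friendly frogs on colored points `(A, B)`.  Positions are
ordered pairs `(x, y)` of points of opposite colors, `y` being the frog of the player
about to move; a legal move goes to `(z, x)` where `z ≠ y` has the same color as `y` and
`dist z x < dist x y`. -/
def CPMove {d : ℕ} (A B : Set (Pt d)) (p q : Pt d × Pt d) : Prop :=
  ∃ x y z, p = (x, y) ∧ q = (z, x) ∧ z ≠ y ∧ dist z x < dist x y ∧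
    ((x ∈ A ∧ y ∈ B ∧ z ∈ B) ∨ (x ∈ B ∧ y ∈ A ∧ z ∈ A))

/-!
Desire satisfies the recursion defining P-positions: `x` desires `y` iff no move from `(x, y)`
reaches a position `(z, x)` with `z` desiring `x`. As the move relation is well founded, that
recursion has only one solution. If `x` desires `y`, a move to `(z, x)` with `z` desiring `x`
makes `x, z` a blocking pair: `x` strictly prefers `z` to its partner, and distinct distances
make `z`'s weak preference for `x` strict. If `x` does not desire `y`, it moves to `(M x, x)`,
and `M x` desires its own partner.
-/

theorem WellFounded.iff_of_iff_forall_not {α : Type*} {r : α → α → Prop} (hr : WellFounded r)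
    {S : α → Prop} (hS : ∀ p q, r q p → S q) {P Q : α → Prop}
    (hP : ∀ p, S p → (P p ↔ ∀ q, r q p → ¬ P q))
    (hQ : ∀ p, S p → (Q p ↔ ∀ q, r q p → ¬ Q q)) :
    ∀ p, S p → (P p ↔ Q p) := by
  intro p
  induction p using hr.induction with
  | _ p ih =>
    intro hp
    rw [hP p hp, hQ p hp]
    exact forall_congr' fun q => imp_congr_right fun hqp => not_congr (ih q hqp (hS p q hqp))

section

variable {d : ℕ} {A B : Set (Pt d)} {R : Pt d → Pt d → Prop} {x y z : Pt d}

def OppColored (A B : Set (Pt d)) (x y : Pt d) : Prop :=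
  (x ∈ A ∧ y ∈ B) ∨ (x ∈ B ∧ y ∈ A)

def Partners (R : Pt d → Pt d → Prop) (x y : Pt d) : Prop :=
  R x y ∨ R y x

def Desires (R : Pt d → Pt d → Prop) (x y : Pt d) : Prop :=
  ∀ z, Partners R x z → dist x y ≤ dist x z

def StrictlyDesires (R : Pt d → Pt d → Prop) (x y : Pt d) : Prop :=
  ∀ z, Partners R x z → dist x y < dist x z

theorem OppColored.symm (h : OppColored A B x y) : OppColored A B y x :=
  (h.imp And.symm And.symm).symm

theorem OppColored.mem_union_left (h : OppColored A B x y) : x ∈ A ∪ B :=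
  h.imp And.left And.left

theorem OppColored.mem_union_right (h : OppColored A B x y) : y ∈ A ∪ B :=
  h.symm.mem_union_left

theorem OppColored.ne (hdisj : Disjoint A B) (h : OppColored A B x y) : x ≠ y := by
  rintro rfl
  rcases h with ⟨hA, hB⟩ | ⟨hB, hA⟩ <;> exact Set.disjoint_left.mp hdisj hA hB

theorem Partners.symm (h : Partners R x y) : Partners R y x :=
  Or.symm h

theorem StrictlyDesires.not_partners (h : StrictlyDesires R x y) : ¬ Partners R x y :=
  fun hp => (h y hp).false

theorem IsTCMatching.oppColored_of_partners (hM : IsTCMatching A B R) (h : Partners R x y) :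
    OppColored A B x y :=
  h.imp (hM.1 x y) fun h => (hM.1 y x h).symm

theorem IsTCMatching.partners_unique (hM : IsTCMatching A B R) (hdisj : Disjoint A B)
    (hy : Partners R x y) (hz : Partners R x z) : y = z := by
  rcases hy with hy | hy <;> rcases hz with hz | hz
  · exact hM.2.1 x y z hy hz
  · exact absurd (hM.1 x y hy).1 (Set.disjoint_right.mp hdisj (hM.1 z x hz).2)
  · exact absurd (hM.1 x z hz).1 (Set.disjoint_right.mp hdisj (hM.1 y x hy).2)
  · exact hM.2.2 y z x hy hz

theorem IsTCMatching.desires_of_partners (hM : IsTCMatching A B R) (hdisj : Disjoint A B)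
    (h : Partners R x y) : Desires R x y :=
  fun _ hz => (hM.partners_unique hdisj h hz) ▸ le_rfl

theorem IsTCMatching.strictlyDesires_of_desires (hM : IsTCMatching A B R) (hdisj : Disjoint A B)
    (hdist : DistinctDist (A ∪ B)) (hxy : OppColored A B x y) (hnp : ¬ Partners R x y)
    (h : Desires R x y) : StrictlyDesires R x y := by
  intro z hz
  have hxz := hM.oppColored_of_partners hz
  refine (h z hz).lt_of_ne fun heq => ?_
  rcases hdist x hxy.mem_union_left y hxy.mem_union_right x hxz.mem_union_left z
      hxz.mem_union_right (hxy.ne hdisj) (hxz.ne hdisj) heq with ⟨-, rfl⟩ | ⟨rfl, -⟩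
  · exact hnp hz
  · exact hxz.ne hdisj rfl

theorem IsTCStable.false_of_strictlyDesires (hS : IsTCStable A B R) (hxy : OppColored A B x y)
    (hx : StrictlyDesires R x y) (hy : StrictlyDesires R y x) : False := by
  wlog hxA : x ∈ A ∧ y ∈ B generalizing x y
  · exact this hxy.symm hy hx ((hxy.resolve_left hxA).symm)
  refine hS ⟨x, hxA.1, y, hxA.2, fun h => hx.not_partners (Or.inl h), fun z hz => hx z (Or.inl hz),
    fun z hz => ?_⟩
  rw [dist_comm x, dist_comm z]
  exact hy z (Or.inr hz)

theorem CPMove.exists_eq {p q : Pt d × Pt d} (h : CPMove A B p q) :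
    ∃ z, q = (z, p.1) ∧ OppColored A B p.1 p.2 ∧ OppColored A B p.1 z ∧
      dist p.1 z < dist p.1 p.2 := by
  obtain ⟨x, y, z, rfl, rfl, -, hlt, hcol⟩ := h
  refine ⟨z, rfl, ?_, ?_, by rwa [dist_comm]⟩ <;> rcases hcol with ⟨hx, hy, hz⟩ | ⟨hx, hy, hz⟩
  exacts [Or.inl ⟨hx, hy⟩, Or.inr ⟨hx, hy⟩, Or.inl ⟨hx, hz⟩, Or.inr ⟨hx, hz⟩]

theorem CPMove.oppColored_snd {p q : Pt d × Pt d} (h : CPMove A B p q) :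
    OppColored A B q.1 q.2 := by
  obtain ⟨z, rfl, -, hz, -⟩ := h.exists_eq
  exact hz.symm

theorem cpMove_of_dist_lt (hdisj : Disjoint A B) (hxy : OppColored A B x y)
    (hxz : OppColored A B x z) (h : dist x z < dist x y) : CPMove A B (x, y) (z, x) := by
  refine ⟨x, y, z, rfl, rfl, fun hzy => (hzy ▸ h).false, by rwa [dist_comm], ?_⟩
  rcases hxy with ⟨hxA, hyB⟩ | ⟨hxB, hyA⟩ <;> rcases hxz with ⟨hxA', hzB⟩ | ⟨hxB', hzA⟩
  · exact Or.inl ⟨hxA, hyB, hzB⟩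
  · exact absurd hxB' (Set.disjoint_left.mp hdisj hxA)
  · exact absurd hxA' (Set.disjoint_right.mp hdisj hxB)
  · exact Or.inr ⟨hxB, hyA, hzA⟩

/-- Along a play, the frogs' successive positions `(p n).2` form a descending chain. -/
theorem NoDescChain.wellFounded_flip_cpMove (hchain : NoDescChain (A ∪ B)) :
    WellFounded (flip (CPMove A B)) := by
  refine wellFounded_iff_isEmpty_descending_chain.mpr ⟨fun ⟨p, hp⟩ => hchain ?_⟩
  choose z hq hp₀ _ hlt using fun n => (hp n).exists_eq
  have hdist : ∀ n, dist (p n).2 (p (n + 1)).2 = dist (p n).1 (p n).2 := fun n => by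
    rw [hq n, dist_comm]
  refine ⟨fun n => (p n).2, fun n => (hp₀ n).mem_union_right, strictAnti_nat_of_succ_lt fun n => ?_⟩
  simp only [hdist]
  calc dist (p (n + 1)).1 (p (n + 1)).2 = dist (p n).1 (z n) := by rw [hq n, dist_comm]
    _ < dist (p n).1 (p n).2 := hlt n

theorem desires_iff_forall_cpMove_not_desires (hdisj : Disjoint A B)
    (hdist : DistinctDist (A ∪ B)) (hM : IsTCMatching A B R) (hS : IsTCStable A B R)
    (hxy : OppColored A B x y) :
    Desires R x y ↔ ∀ q, CPMove A B (x, y) q → ¬ Desires R q.1 q.2 := by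
  constructor
  · intro hx q hq hz
    obtain ⟨z, rfl, -, hxz, hlt⟩ := hq.exists_eq
    have hxz' : StrictlyDesires R x z := fun w hw => hlt.trans_le (hx w hw)
    exact hS.false_of_strictlyDesires hxz hxz'
      (hM.strictlyDesires_of_desires hdisj hdist hxz.symm (fun h => hxz'.not_partners h.symm) hz)
  · intro h z hz
    by_contra! hlt
    exact h _ (cpMove_of_dist_lt hdisj hxy (hM.oppColored_of_partners hz) hlt)
      (hM.desires_of_partners hdisj hz.symm)

end

/-- let `A`, `B` be disjoint with `A ∪ B` having distinct distances and no
infinite descending chains, let `R` be the (unique) stable two-color matching of `(A, B)`,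
and let `P` be the P-position predicate of colored friendly frogs on colored points (any
predicate satisfying the defining fixpoint equation, which determines it uniquely by
well-foundedness).  Then a position `(x, y)` with `x`, `y` of opposite colors is a
P-position if and only if `x` desires `y`, i.e. `dist x y ≤ dist x (M x)` (the right side
being `∞` if `x` is unmatched). -/
theorem colored_points_ppositions_iff_desire {d : ℕ} (A B : Set (Pt d))
    (hdisj : Disjoint A B) (hdist : DistinctDist (A ∪ B)) (hchain : NoDescChain (A ∪ B))
    (R : Pt d → Pt d → Prop) (hM : IsTCMatching A B R) (hS : IsTCStable A B R)
    (P : Pt d × Pt d → Prop)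
    (hP : ∀ x y, (x ∈ A ∧ y ∈ B) ∨ (x ∈ B ∧ y ∈ A) →
      (P (x, y) ↔ ∀ q, CPMove A B (x, y) q → ¬ P q)) :
    ∀ x y, (x ∈ A ∧ y ∈ B) ∨ (x ∈ B ∧ y ∈ A) →
      (P (x, y) ↔ ∀ z, R x z ∨ R z x → dist x y ≤ dist x z) := by
  intro x y hxy
  exact hchain.wellFounded_flip_cpMove.iff_of_iff_forall_not
    (S := fun p => OppColored A B p.1 p.2) (fun _ _ hpq => hpq.oppColored_snd)
    (fun p hp => hP p.1 p.2 hp)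
    (fun p hp => desires_iff_forall_cpMove_not_desires hdisj hdist hM hS hp) (x, y) hxy
end
end

section
/- Let L ⊂ ℝ^d have distinct distances and no infinite descending chains. Then there exists a unique matching M̃ of L that matches no mutually nearest pair and is stable subject to this restriction. Moreover M̃ leaves at most two points of L unmatched, and if it leaves exactly two points unmatched then those two points are mutually nearest points of L. -/
/-!
Say that `x, y` are a mutual choice for a relation `G` if they form an allowed pair and every
allowed point that one of them prefers to the other is `G`-matched to a point it prefers even
more. Restricted stable matchings without mutually nearest pairs are exactly the fixed points of
`G ↦ MutualChoice L G`, and a fixed point exists by Knaster–Tarski since this operator is monotone.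

Without descending chains, ordered pairs carry a well-founded order in which `(z, w)` lies below
`(x, y)` whenever `d(z, w) < d(a, z) < d(x, y)` for an endpoint `a` of `(x, y)`. Whether `(x, y)` is
a mutual choice only depends on `G` below `(x, y)`, so fixed points are unique, and well-founded
induction shows that a fixed point is a matching with no blocking pair. Two unmatched points would
block unless they are mutually nearest, and three points cannot be pairwise mutually nearest.
-/

noncomputable section

/-- `R` encodes a matching of `L` (as the symmetric relation "matched to"):
a set of unordered pairs of distinct points of `L`, each point in at most one pair. -/
def IsMatching {d : ℕ} (L : Set (Pt d)) (R : Pt d → Pt d → Prop) : Prop :=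
  (∀ x y, R x y → R y x) ∧
  (∀ x y, R x y → x ∈ L ∧ y ∈ L ∧ x ≠ y) ∧
  (∀ x y z, R x y → R x z → y = z)

/-- The matching `R` of `L` is stable: there is no pair of distinct points of `L`, not matched
to each other, each of which is unmatched or strictly farther from its partner than from
the other point. -/
def IsStable {d : ℕ} (L : Set (Pt d)) (R : Pt d → Pt d → Prop) : Prop :=
  ¬ ∃ x ∈ L, ∃ y ∈ L, x ≠ y ∧ ¬ R x y ∧
    (∀ z, R x z → dist x y < dist x z) ∧ (∀ z, R y z → dist x y < dist y z)

/-- `x` and `y` are distinct points of `L` that are each other's (unique) nearest points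
of `L`. -/
def MutuallyNearest {d : ℕ} (L : Set (Pt d)) (x y : Pt d) : Prop :=
  x ∈ L ∧ y ∈ L ∧ x ≠ y ∧
  (∀ z ∈ L, z ≠ x → z ≠ y → dist x y < dist x z) ∧
  (∀ z ∈ L, z ≠ x → z ≠ y → dist x y < dist y z)

/-- The matching `R` of `L` is stable subject to the restriction that mutually nearest
points cannot be matched: there are no distinct points `x, y ∈ L` that are not mutually
nearest and not matched to each other, each of which is unmatched or strictly farther
from its partner than from the other point. -/
def IsRestrictedStable {d : ℕ} (L : Set (Pt d)) (R : Pt d → Pt d → Prop) : Prop :=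
  ¬ ∃ x ∈ L, ∃ y ∈ L, x ≠ y ∧ ¬ MutuallyNearest L x y ∧ ¬ R x y ∧
    (∀ z, R x z → dist x y < dist x z) ∧ (∀ z, R y z → dist x y < dist y z)

open Function Relation

variable {d : ℕ} {L : Set (Pt d)}

lemma MutuallyNearest.symm {x y : Pt d} (h : MutuallyNearest L x y) : MutuallyNearest L y x := by
  obtain ⟨hx, hy, hne, hxz, hyz⟩ := h
  exact ⟨hy, hx, hne.symm, fun z hz hzy hzx => dist_comm x y ▸ hyz z hz hzx hzy,
    fun z hz hzy hzx => dist_comm x y ▸ hxz z hz hzx hzy⟩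

lemma DistinctDist.dist_ne (hdist : DistinctDist L) {x y z : Pt d} (hx : x ∈ L) (hy : y ∈ L)
    (hz : z ∈ L) (hxy : x ≠ y) (hxz : x ≠ z) (hyz : y ≠ z) : dist x y ≠ dist x z := by
  intro h
  rcases hdist x hx y hy x hx z hz hxy hxz h with ⟨-, h⟩ | ⟨h, -⟩
  exacts [hyz h, hxz h]

/-- Points of `L \ {p}` converging fast enough to an accumulation point `p` form a descending
chain. -/
lemma NoDescChain.finite_inter_closedBall (hch : NoDescChain L) (a : Pt d) (r : ℝ) :
    (L ∩ Metric.closedBall a r).Finite := by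
  by_contra hinf
  obtain ⟨p, -, hp⟩ := Set.Infinite.exists_accPt_of_subset_isCompact hinf
    (isCompact_closedBall a r) Set.inter_subset_right
  have hnear : ∀ ε > 0, ∃ z ∈ L, z ≠ p ∧ dist z p < ε := by
    intro ε hε
    obtain ⟨z, ⟨hzε, hzL, -⟩, hzp⟩ := accPt_iff_nhds.mp hp _ (Metric.ball_mem_nhds p hε)
    exact ⟨z, hzL, hzp, hzε⟩
  choose! next hnextL hnextp hnextd using
    fun z (hz : z ≠ p) => hnear (dist z p / 3) (div_pos (dist_pos.mpr hz) three_pos)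
  obtain ⟨z₀, hz₀L, hz₀p, -⟩ := hnear 1 one_pos
  set c : ℕ → Pt d := fun n => next^[n] z₀
  have hc_succ (n : ℕ) : c (n + 1) = next (c n) := iterate_succ_apply' next n z₀
  have hcL (n : ℕ) : c n ∈ L ∧ c n ≠ p := by
    induction n with
    | zero => exact ⟨hz₀L, hz₀p⟩
    | succ n ih => rw [hc_succ]; exact ⟨hnextL _ ih.2, hnextp _ ih.2⟩
  have hshrink (n : ℕ) : dist (c (n + 1)) p < dist (c n) p / 3 := by
    rw [hc_succ]; exact hnextd _ (hcL n).2
  refine hch ⟨c, fun n => (hcL n).1, strictAnti_nat_of_succ_lt fun n => ?_⟩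
  have h₁ := hshrink n
  have h₂ := hshrink (n + 1)
  have h₃ := dist_triangle_right (c (n + 1)) (c (n + 2)) p
  have h₄ := dist_triangle (c n) (c (n + 1)) p
  have h₅ := dist_pos.mpr (hcL (n + 2)).2
  show dist (c (n + 1)) (c (n + 2)) < dist (c n) (c (n + 1))
  linarith

def Descends (L : Set (Pt d)) (q p : Pt d × Pt d) : Prop :=
  q.1 ∈ L ∧ dist p.1 q.1 ≤ dist p.1 p.2 ∧ dist q.1 q.2 < dist p.1 q.1

/-- In a descending sequence `p₀, p₁, …` the points `(p₁).1, (p₂).1, …` form a descending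
chain. -/
lemma NoDescChain.wellFounded_descends (hch : NoDescChain L) : WellFounded (Descends L) := by
  refine wellFounded_iff_isEmpty_descending_chain.mpr ⟨fun p => hch ?_⟩
  obtain ⟨p, hp⟩ := p
  refine ⟨fun n => (p (n + 1)).1, fun n => (hp n).1, strictAnti_nat_of_succ_lt fun n => ?_⟩
  exact (hp (n + 2)).2.1.trans_lt (hp (n + 1)).2.2

lemma descends_transGen_of_near {x y a z w : Pt d} (hy : y ∈ L) (hz : z ∈ L)
    (ha : a = x ∨ a = y) (hzw : dist z w < dist a z) (haz : dist a z < dist x y) :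
    TransGen (Descends L) (z, w) (x, y) := by
  rcases ha with rfl | rfl
  · exact .single ⟨hz, haz.le, hzw⟩
  · have hyz : Descends L (a, z) (x, a) := ⟨hy, le_rfl, haz⟩
    exact .head (show Descends L (z, w) (a, z) from ⟨hz, le_rfl, hzw⟩) (.single hyz)

def NoBetterOption (L : Set (Pt d)) (G : Pt d → Pt d → Prop) (a b : Pt d) : Prop :=
  ∀ z ∈ L, z ≠ a → ¬ MutuallyNearest L a z → dist a z < dist a b →
    ∃ w, dist z w < dist a z ∧ G z w

def MutualChoice (L : Set (Pt d)) (G : Pt d → Pt d → Prop) (x y : Pt d) : Prop :=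
  x ∈ L ∧ y ∈ L ∧ x ≠ y ∧ ¬ MutuallyNearest L x y ∧
    NoBetterOption L G x y ∧ NoBetterOption L G y x

def IsBlocking (L : Set (Pt d)) (G : Pt d → Pt d → Prop) (x y : Pt d) : Prop :=
  x ∈ L ∧ y ∈ L ∧ x ≠ y ∧ ¬ MutuallyNearest L x y ∧ ¬ G x y ∧
    (∀ z, G x z → dist x y < dist x z) ∧ (∀ z, G y z → dist x y < dist y z)

section MutualChoice

variable {G G' : Pt d → Pt d → Prop} {x y : Pt d}

lemma MutualChoice.symm (h : MutualChoice L G x y) : MutualChoice L G y x :=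
  let ⟨hx, hy, hne, hmn, hbx, hby⟩ := h
  ⟨hy, hx, hne.symm, fun h => hmn h.symm, hby, hbx⟩

lemma MutualChoice.mono (h : ∀ z w, TransGen (Descends L) (z, w) (x, y) → G z w → G' z w)
    (hxy : MutualChoice L G x y) : MutualChoice L G' x y := by
  obtain ⟨hx, hy, hne, hmn, hbx, hby⟩ := hxy
  refine ⟨hx, hy, hne, hmn, fun z hz hzx hzmn hlt => ?_, fun z hz hzy hzmn hlt => ?_⟩
  · exact (hbx z hz hzx hzmn hlt).imp fun w hw =>
      ⟨hw.1, h z w (descends_transGen_of_near hy hz (.inl rfl) hw.1 hlt) hw.2⟩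
  · exact (hby z hz hzy hzmn hlt).imp fun w hw =>
      ⟨hw.1, h z w (descends_transGen_of_near hy hz (.inr rfl) hw.1 (dist_comm y x ▸ hlt)) hw.2⟩

lemma monotone_mutualChoice : Monotone (MutualChoice L) :=
  fun _ _ hGG' _ _ => MutualChoice.mono fun z w _ => hGG' z w

lemma exists_isFixedPt_mutualChoice : ∃ G, IsFixedPt (MutualChoice L) G :=
  ⟨_, OrderHom.isFixedPt_lfp ⟨MutualChoice L, monotone_mutualChoice⟩⟩

lemma mutualChoice_iff_of_isFixedPt (hG : IsFixedPt (MutualChoice L) G) :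
    MutualChoice L G x y ↔ G x y := by
  rw [hG.eq]

end MutualChoice

section FixedPoint

variable {G : Pt d → Pt d → Prop} (hG : IsFixedPt (MutualChoice L) G)
include hG

lemma symm_of_isFixedPt {x y : Pt d} (h : G x y) : G y x :=
  (mutualChoice_iff_of_isFixedPt hG).mp ((mutualChoice_iff_of_isFixedPt hG).mpr h).symm

lemma isMatching_of_isFixedPt (hdist : DistinctDist L) (hch : NoDescChain L) :
    IsMatching L G := by
  have hmem {x y : Pt d} (h : G x y) : x ∈ L ∧ y ∈ L ∧ x ≠ y ∧ ¬ MutuallyNearest L x y :=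
    let ⟨hx, hy, hne, hmn, _⟩ := (mutualChoice_iff_of_isFixedPt hG).mpr h
    ⟨hx, hy, hne, hmn⟩
  -- If `G x y` and `G x z` with `y` closer, `y` must prefer its partner `w` to `x`,
  -- and `(y, w)`, `(y, x)` is a smaller instance of the same situation.
  have key (p : Pt d × Pt d) : G p.1 p.2 → ∀ z, G p.1 z → ¬ dist p.1 p.2 < dist p.1 z := by
    induction p using hch.wellFounded_descends.induction with
    | _ p ih =>
      obtain ⟨x, y⟩ := p
      intro hxy z hxz hlt
      obtain ⟨-, hy, hne, hmn⟩ := hmem hxy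
      obtain ⟨-, -, -, -, hbx, -⟩ := (mutualChoice_iff_of_isFixedPt hG).mpr hxz
      obtain ⟨w, hyw, hGyw⟩ := hbx y hy hne.symm hmn hlt
      exact ih (y, w) ⟨hy, le_rfl, hyw⟩ hGyw x (symm_of_isFixedPt hG hxy) (dist_comm x y ▸ hyw)
  refine ⟨fun x y => symm_of_isFixedPt hG,
    fun x y h => ⟨(hmem h).1, (hmem h).2.1, (hmem h).2.2.1⟩, fun x y z hxy hxz => ?_⟩
  by_contra hyz
  obtain ⟨hx, hy, hxy', -⟩ := hmem hxy
  obtain ⟨-, hz, hxz', -⟩ := hmem hxz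
  rcases lt_trichotomy (dist x y) (dist x z) with h | h | h
  · exact key (x, y) hxy z hxz h
  · exact hdist.dist_ne hx hy hz hxy' hxz' hyz h
  · exact key (x, z) hxz y hxy h

lemma exists_isBlocking_near_of_isFixedPt (hdist : DistinctDist L) (hch : NoDescChain L)
    {a b : Pt d} (ha : a ∈ L) (hfar : ∀ z, G a z → dist a b < dist a z)
    (hb : ¬ NoBetterOption L G a b) :
    ∃ z₀ z₁, IsBlocking L G z₀ z₁ ∧ dist z₀ z₁ < dist a z₀ ∧ dist a z₀ < dist a b := by
  set W : Set (Pt d) := {z | z ∈ L ∧ z ≠ a ∧ ¬ MutuallyNearest L a z ∧ dist a z < dist a b ∧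
    ∀ w, dist z w < dist a z → ¬ G z w}
  have hW : W.Nonempty := by
    rw [NoBetterOption] at hb
    push Not at hb
    exact hb
  have hWfin : W.Finite := (hch.finite_inter_closedBall a (dist a b)).subset fun z hz =>
    ⟨hz.1, Metric.mem_closedBall.mpr (dist_comm z a ▸ hz.2.2.2.1.le)⟩
  obtain ⟨z₀, ⟨hz₀, hz₀a, hz₀mn, hz₀b, hz₀free⟩, hmin⟩ := W.exists_min_image (dist a) hWfin hW
  have hnG : ¬ G a z₀ := fun h => (hfar z₀ h).not_gt hz₀b
  have hsides : ¬ NoBetterOption L G a z₀ ∨ ¬ NoBetterOption L G z₀ a := by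
    by_contra! h
    exact hnG ((mutualChoice_iff_of_isFixedPt hG).mp ⟨ha, hz₀, hz₀a.symm, hz₀mn, h.1, h.2⟩)
  rw [NoBetterOption, NoBetterOption] at hsides
  push Not at hsides
  rcases hsides with ⟨z₁, hz₁, hz₁a, hz₁mn, hz₁lt, hz₁free⟩ |
    ⟨z₁, hz₁, hz₁z₀, hz₁mn, hz₁lt, hz₁free⟩
  · -- `z₁` would be a point of `W` closer to `a` than `z₀`
    exact ((hmin z₁ ⟨hz₁, hz₁a, hz₁mn, hz₁lt.trans hz₀b, hz₁free⟩).not_gt hz₁lt).elim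
  rw [dist_comm z₀ a] at hz₁lt
  have hnG₀₁ : ¬ G z₀ z₁ := hz₀free z₁ hz₁lt
  refine ⟨z₀, z₁, ⟨hz₀, hz₁, hz₁z₀.symm, hz₁mn, hnG₀₁, fun w hw => ?_, fun w hw => ?_⟩,
    hz₁lt, hz₀b⟩
  · exact hz₁lt.trans_le (not_lt.mp fun h => hz₀free w h hw)
  · obtain ⟨-, hwL, hz₁w, -⟩ := (mutualChoice_iff_of_isFixedPt hG).mpr hw
    have hwz₀ : z₀ ≠ w := fun h => hnG₀₁ (symm_of_isFixedPt hG (h ▸ hw))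
    refine lt_of_le_of_ne (not_lt.mp fun h => hz₁free w h hw) ?_
    rw [dist_comm z₀ z₁]
    exact hdist.dist_ne hz₁ hz₀ hwL hz₁z₀ hz₁w hwz₀

lemma isRestrictedStable_of_isFixedPt (hdist : DistinctDist L) (hch : NoDescChain L) :
    IsRestrictedStable L G := by
  -- a blocking pair always yields a smaller one
  have key (p : Pt d × Pt d) : ¬ IsBlocking L G p.1 p.2 := by
    induction p using hch.wellFounded_descends.transGen.induction with
    | _ p ih =>
      obtain ⟨x, y⟩ := p
      rintro ⟨hx, hy, hne, hmn, hnG, hfx, hfy⟩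
      have hsides : ¬ NoBetterOption L G x y ∨ ¬ NoBetterOption L G y x := by
        by_contra! h
        exact hnG ((mutualChoice_iff_of_isFixedPt hG).mp ⟨hx, hy, hne, hmn, h.1, h.2⟩)
      rcases hsides with h | h
      · obtain ⟨z₀, z₁, hblk, h₀₁, hx₀⟩ :=
          exists_isBlocking_near_of_isFixedPt hG hdist hch hx hfx h
        exact ih (z₀, z₁) (descends_transGen_of_near hy hblk.1 (.inl rfl) h₀₁ hx₀) hblk
      · obtain ⟨z₀, z₁, hblk, h₀₁, hy₀⟩ := exists_isBlocking_near_of_isFixedPt hG hdist hch hy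
          (fun z hz => dist_comm x y ▸ hfy z hz) h
        exact ih (z₀, z₁)
          (descends_transGen_of_near hy hblk.1 (.inr rfl) h₀₁ (dist_comm y x ▸ hy₀)) hblk
  rintro ⟨x, hx, y, hy, hblk⟩
  exact key (x, y) ⟨hx, hy, hblk⟩

end FixedPoint

lemma eq_of_isFixedPt_mutualChoice (hch : NoDescChain L) {G G' : Pt d → Pt d → Prop}
    (hG : IsFixedPt (MutualChoice L) G) (hG' : IsFixedPt (MutualChoice L) G') : G = G' := by
  have key (p : Pt d × Pt d) : G p.1 p.2 ↔ G' p.1 p.2 := by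
    induction p using hch.wellFounded_descends.transGen.induction with
    | _ p ih =>
      rw [← mutualChoice_iff_of_isFixedPt hG, ← mutualChoice_iff_of_isFixedPt hG']
      exact ⟨.mono fun z w h => (ih (z, w) h).1, .mono fun z w h => (ih (z, w) h).2⟩
  funext x y
  exact propext (key (x, y))

section RestrictedStable

variable {R : Pt d → Pt d → Prop}

lemma dist_lt_of_noBetterOption (hdist : DistinctDist L) (hR : IsMatching L R)
    (hRmn : ∀ x y, R x y → ¬ MutuallyNearest L x y) {x y z : Pt d} (hx : x ∈ L) (hy : y ∈ L)
    (hne : x ≠ y) (hnR : ¬ R x y) (hb : NoBetterOption L R x y) (hxz : R x z) :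
    dist x y < dist x z := by
  obtain ⟨-, hz, hxz'⟩ := hR.2.1 x z hxz
  have hzy : z ≠ y := fun h => hnR (h ▸ hxz)
  by_contra! hle
  have hlt : dist x z < dist x y := lt_of_le_of_ne hle (hdist.dist_ne hx hz hy hxz' hne hzy)
  obtain ⟨w, hzw, hRzw⟩ := hb z hz hxz'.symm (hRmn x z hxz) hlt
  rw [hR.2.2 z w x hRzw (hR.1 x z hxz), dist_comm] at hzw
  exact hzw.false

lemma noBetterOption_of_isRestrictedStable (hdist : DistinctDist L) (hR : IsMatching L R)
    (hst : IsRestrictedStable L R) {x y : Pt d} (hxy : R x y) : NoBetterOption L R x y := by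
  obtain ⟨hx, -, -⟩ := hR.2.1 x y hxy
  intro z hz hzx hmn hlt
  by_contra! hfree
  have hnRxz : ¬ R x z := fun h => (hR.2.2 x z y h hxy ▸ hlt).false
  refine hst ⟨x, hx, z, hz, hzx.symm, hmn, hnRxz, fun w hw => hR.2.2 x w y hw hxy ▸ hlt,
    fun w hw => ?_⟩
  obtain ⟨-, hwL, hzw⟩ := hR.2.1 z w hw
  have hwx : x ≠ w := fun h => hnRxz (hR.1 z x (h ▸ hw))
  refine lt_of_le_of_ne (not_lt.mp fun h => hfree w h hw) ?_
  rw [dist_comm x z]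
  exact hdist.dist_ne hz hx hwL hzx hzw hwx

lemma isFixedPt_of_isRestrictedStable (hdist : DistinctDist L) (hR : IsMatching L R)
    (hRmn : ∀ x y, R x y → ¬ MutuallyNearest L x y) (hst : IsRestrictedStable L R) :
    IsFixedPt (MutualChoice L) R := by
  funext x y
  refine propext ⟨fun ⟨hx, hy, hne, hmn, hbx, hby⟩ => ?_, fun hxy => ?_⟩
  · by_contra hnR
    exact hst ⟨x, hx, y, hy, hne, hmn, hnR,
      fun z => dist_lt_of_noBetterOption hdist hR hRmn hx hy hne hnR hbx,
      fun z hyz => dist_comm y x ▸ dist_lt_of_noBetterOption hdist hR hRmn hy hx hne.symm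
        (fun h => hnR (hR.1 y x h)) hby hyz⟩
  · obtain ⟨hx, hy, hne⟩ := hR.2.1 x y hxy
    exact ⟨hx, hy, hne, hRmn x y hxy, noBetterOption_of_isRestrictedStable hdist hR hst hxy,
      noBetterOption_of_isRestrictedStable hdist hR hst (hR.1 x y hxy)⟩

end RestrictedStable

lemma mutuallyNearest_of_unmatched {R : Pt d → Pt d → Prop} (hst : IsRestrictedStable L R)
    {x y : Pt d} (hx : x ∈ L) (hy : y ∈ L) (hne : x ≠ y) (hfx : ∀ w, ¬ R x w)
    (hfy : ∀ w, ¬ R y w) : MutuallyNearest L x y := by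
  by_contra hmn
  exact hst ⟨x, hx, y, hy, hne, hmn, hfx y, fun z h => (hfx z h).elim, fun z h => (hfy z h).elim⟩

lemma MutuallyNearest.unique {x y z : Pt d} (hxy : MutuallyNearest L x y)
    (hxz : MutuallyNearest L x z) : y = z := by
  by_contra hyz
  exact (hxy.2.2.2.1 z hxz.2.1 hxz.2.2.1.symm (Ne.symm hyz)).not_gt
    (hxz.2.2.2.1 y hxy.2.1 hxy.2.2.1.symm hyz)

/-- a set `L` with distinct distances and no infinite descending chains has a
unique matching that matches no mutually nearest pair and is stable subject to this
restriction; moreover this matching leaves at most two points unmatched, and if exactly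
two then they are mutually nearest points of `L`. -/
theorem exists_unique_restricted_stable_matching {d : ℕ} (L : Set (Pt d))
    (hdist : DistinctDist L) (hchain : NoDescChain L) :
    (∃! R : Pt d → Pt d → Prop, IsMatching L R ∧
      (∀ x y, R x y → ¬ MutuallyNearest L x y) ∧ IsRestrictedStable L R) ∧
    ∀ R : Pt d → Pt d → Prop, IsMatching L R →
      (∀ x y, R x y → ¬ MutuallyNearest L x y) → IsRestrictedStable L R →
      (∀ x ∈ L, ∀ y ∈ L, ∀ z ∈ L,
        (∀ w, ¬ R x w) → (∀ w, ¬ R y w) → (∀ w, ¬ R z w) → x = y ∨ x = z ∨ y = z) ∧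
      (∀ x ∈ L, ∀ y ∈ L, x ≠ y →
        (∀ w, ¬ R x w) → (∀ w, ¬ R y w) → MutuallyNearest L x y) := by
  obtain ⟨G, hG⟩ := exists_isFixedPt_mutualChoice (L := L)
  refine ⟨⟨G, ⟨isMatching_of_isFixedPt hG hdist hchain,
    fun x y h => ((mutualChoice_iff_of_isFixedPt hG).mpr h).2.2.2.1,
    isRestrictedStable_of_isFixedPt hG hdist hchain⟩, fun R ⟨hR, hRmn, hst⟩ =>
    eq_of_isFixedPt_mutualChoice hchain (isFixedPt_of_isRestrictedStable hdist hR hRmn hst) hG⟩,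
    fun R _ _ hst => ⟨fun x hx y hy z hz hfx hfy hfz => ?_, fun x hx y hy hne hfx hfy =>
      mutuallyNearest_of_unmatched hst hx hy hne hfx hfy⟩⟩
  by_contra! hne
  exact hne.2.2 ((mutuallyNearest_of_unmatched hst hx hy hne.1 hfx hfy).unique
    (mutuallyNearest_of_unmatched hst hx hz hne.2.1 hfx hfz))
end
end

section
/- Let L ⊂ ℝ^d have distinct distances and no infinite descending chains, and let M̃ be the unique stable matching of L subject to the restriction that mutually nearest points cannot be matched. In misère friendly frogs on L, the position with two frogs at x and y is a P-position if and only if {x,y} ∈ M̃. -/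
noncomputable section

/-- The friendly frogs move relation on two-frog positions, which are unordered pairs of
distinct points of `L`: one of the two points is replaced by a point `z ∈ L` outside the
pair in such a way that the distance between the occupied points strictly decreases. -/
def FFMove {d : ℕ} (L : Set (Pt d)) (p q : Sym2 (Pt d)) : Prop :=
  ∃ x y z, x ∈ L ∧ y ∈ L ∧ z ∈ L ∧ x ≠ y ∧ z ≠ x ∧ z ≠ y ∧
    dist x z < dist x y ∧ p = s(x, y) ∧ q = s(x, z)

/-!
Every move shrinks the distance between the frogs, and there is no infinite play: moves that
keep a frog at `a` stay in a bounded, hence finite, part of `L` (an infinite bounded part would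
accumulate at a point, and points converging fast to it form a descending chain), while a move
of the frog at `a` is a step of a descending chain. So P-positions are determined by
well-founded induction. A matched pair is not mutually nearest, hence has a move, and every move
from it breaks the match, leading by induction to an N-position. An unmatched pair with a move is
not mutually nearest, so restricted stability gives one of its points a partner at most as far
(strictly nearer, by distinct distances); moving there reaches a matched pair, a P-position.
-/

open Bornology Metric Filter

theorem AccPt.exists_strictAnti_dist {α : Type*} [MetricSpace α] {p : α} {S : Set α}
    (hp : AccPt p (𝓟 S)) :
    ∃ c : ℕ → α, (∀ n, c n ∈ S) ∧ StrictAnti fun n => dist (c n) (c (n + 1)) := by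
  have closer : ∀ r > 0, ∃ q ∈ S, q ≠ p ∧ dist q p < r := fun r hr => by
    obtain ⟨q, ⟨hqr, hqS⟩, hqp⟩ := accPt_iff_nhds.mp hp _ (ball_mem_nhds p hr)
    exact ⟨q, hqS, hqp, hqr⟩
  have next : ∀ q : {q // q ∈ S ∧ q ≠ p}, ∃ q' : {q // q ∈ S ∧ q ≠ p},
      dist q'.1 p < dist q.1 p / 3 := fun ⟨q, _, hqp⟩ => by
    obtain ⟨q', hq'S, hq'p, hlt⟩ := closer _ (div_pos (dist_pos.mpr hqp) three_pos)
    exact ⟨⟨q', hq'S, hq'p⟩, hlt⟩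
  choose next hnext using next
  obtain ⟨q₀, hq₀S, hq₀p, -⟩ := closer 1 one_pos
  set c : ℕ → α := fun n => (next^[n] ⟨q₀, hq₀S, hq₀p⟩).1
  have hstep : ∀ n, dist (c (n + 1)) p < dist (c n) p / 3 := fun n => by
    simp only [c, Function.iterate_succ_apply']
    exact hnext _
  refine ⟨c, fun n => (next^[n] _).2.1, strictAnti_nat_of_succ_lt fun n => ?_⟩
  have hpos : 0 < dist (c n) p := dist_pos.mpr (next^[n] _).2.2
  have h₁ := hstep n
  have h₂ := hstep (n + 1)
  have t₁ := dist_triangle (c (n + 1)) p (c (n + 2))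
  have t₂ := dist_triangle (c n) (c (n + 1)) p
  rw [dist_comm p] at t₁
  linarith

section

variable {d : ℕ} {L : Set (Pt d)}

theorem NoDescChain.finite_of_isBounded (hchain : NoDescChain L) {S : Set (Pt d)}
    (hSL : S ⊆ L) (hS : IsBounded S) : S.Finite := by
  by_contra hinf
  obtain ⟨p, -, hp⟩ :=
    Set.Infinite.exists_accPt_of_subset_isCompact hinf hS.isCompact_closure subset_closure
  obtain ⟨c, hcS, hc⟩ := hp.exists_strictAnti_dist
  exact hchain ⟨c, fun n => hSL (hcS n), hc⟩

def ChainStep (L : Set (Pt d)) (q p : Pt d × Pt d) : Prop :=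
  q.1 = p.2 ∧ q.2 ∈ L ∧ dist q.1 q.2 < dist p.1 p.2

theorem NoDescChain.wellFounded_chainStep (hchain : NoDescChain L) :
    WellFounded (ChainStep L) := by
  refine wellFounded_iff_isEmpty_descending_chain.mpr ⟨fun ⟨f, hf⟩ => hchain ?_⟩
  refine ⟨fun n => (f (n + 1)).2, fun n => (hf n).2.1, strictAnti_nat_of_succ_lt fun n => ?_⟩
  have h := (hf (n + 2)).2.2
  rw [(hf (n + 2)).1, (hf (n + 1)).1] at h
  exact h

theorem NoDescChain.wellFounded_dist_lt (hchain : NoDescChain L) (a : Pt d) :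
    WellFounded fun y x => y ∈ L ∧ dist a y < dist a x := by
  refine Subrelation.wf (fun {y x} ⟨hy, hyx⟩ => ?_)
    (measure fun x => {z ∈ L | dist a z < dist a x}.ncard).wf
  have hfin : {z ∈ L | dist a z < dist a x}.Finite :=
    hchain.finite_of_isBounded (Set.sep_subset _ _) <| isBounded_ball.subset fun z hz => by
      rw [mem_ball, dist_comm]
      exact hz.2
  refine Set.ncard_lt_ncard ((Set.ssubset_iff_of_subset ?_).mpr ⟨y, ⟨hy, hyx⟩, ?_⟩) hfin
  · exact fun z hz => ⟨hz.1, hz.2.trans hyx⟩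
  · exact fun hy' => lt_irrefl _ hy'.2

theorem ffMove_mk_iff {x y : Pt d} {q : Sym2 (Pt d)} :
    FFMove L s(x, y) q ↔ x ∈ L ∧ y ∈ L ∧ x ≠ y ∧ ∃ z ∈ L, z ≠ x ∧ z ≠ y ∧
      (dist x z < dist x y ∧ q = s(x, z) ∨ dist y z < dist x y ∧ q = s(y, z)) := by
  constructor
  · rintro ⟨a, b, z, ha, hb, hz, hab, hza, hzb, hlt, hpos, rfl⟩
    rcases Sym2.eq_iff.mp hpos with ⟨rfl, rfl⟩ | ⟨rfl, rfl⟩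
    · exact ⟨ha, hb, hab, z, hz, hza, hzb, Or.inl ⟨hlt, rfl⟩⟩
    · exact ⟨hb, ha, hab.symm, z, hz, hzb, hza, Or.inr ⟨by rwa [dist_comm x y], rfl⟩⟩
  · rintro ⟨hx, hy, hxy, z, hz, hzx, hzy, ⟨hlt, rfl⟩ | ⟨hlt, rfl⟩⟩
    · exact ⟨x, y, z, hx, hy, hz, hxy, hzx, hzy, hlt, rfl, rfl⟩
    · exact ⟨y, x, z, hy, hx, hz, hxy.symm, hzy, hzx, by rwa [dist_comm y x], Sym2.eq_swap,
        rfl⟩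

theorem acc_ffMove_mk {x y : Pt d}
    (hx : ∀ z ∈ L, dist x z < dist x y → Acc (flip (FFMove L)) s(x, z))
    (hy : ∀ z ∈ L, dist y z < dist x y → Acc (flip (FFMove L)) s(y, z)) :
    Acc (flip (FFMove L)) s(x, y) := by
  refine ⟨_, fun q hq => ?_⟩
  obtain ⟨-, -, -, z, hz, -, -, ⟨hlt, rfl⟩ | ⟨hlt, rfl⟩⟩ := ffMove_mk_iff.mp hq
  exacts [hx z hz hlt, hy z hz hlt]

theorem NoDescChain.wellFounded_ffMove (hchain : NoDescChain L) :
    WellFounded (flip (FFMove L)) := by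
  -- Induction on the chain step `(b, a) ↦ (a, c)` handles the moves of the frog at `a`,
  -- an inner induction on the distance to `a` the moves that keep it.
  have key : ∀ p : Pt d × Pt d, ∀ c ∈ L, dist p.2 c < dist p.1 p.2 →
      Acc (flip (FFMove L)) s(p.2, c) := by
    intro p
    induction p using hchain.wellFounded_chainStep.induction with
    | _ p ih =>
      obtain ⟨b, a⟩ := p
      intro c hc hcb
      induction c using (hchain.wellFounded_dist_lt a).induction with
      | _ c ihc =>
        exact acc_ffMove_mk (fun c' hc' h => ihc c' ⟨hc', h⟩ hc' (h.trans hcb))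
          (ih (a, c) ⟨rfl, hc, hcb⟩)
  refine ⟨Sym2.ind fun a b => acc_ffMove_mk (fun c hc h => key (b, a) c hc ?_) (key (a, b))⟩
  rwa [dist_comm b]

theorem DistinctDist.dist_lt_of_le (hdist : DistinctDist L) {x y z : Pt d} (hx : x ∈ L)
    (hy : y ∈ L) (hz : z ∈ L) (hxy : x ≠ y) (hzx : z ≠ x) (hzy : z ≠ y)
    (hle : dist x z ≤ dist x y) : dist x z < dist x y := by
  refine hle.lt_of_ne fun heq => ?_
  rcases hdist x hx z hz x hx y hy hzx.symm hxy heq with ⟨-, h⟩ | ⟨h, -⟩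
  exacts [hzy h, hxy h]

theorem exists_ffMove_iff (hdist : DistinctDist L) {x y : Pt d} (hx : x ∈ L) (hy : y ∈ L)
    (hxy : x ≠ y) : (∃ q, FFMove L s(x, y) q) ↔ ¬ MutuallyNearest L x y := by
  constructor
  · rintro ⟨q, hq⟩ ⟨-, -, -, hnx, hny⟩
    obtain ⟨-, -, -, z, hz, hzx, hzy, ⟨hlt, -⟩ | ⟨hlt, -⟩⟩ := ffMove_mk_iff.mp hq
    exacts [lt_asymm hlt (hnx z hz hzx hzy), lt_asymm hlt (hny z hz hzx hzy)]
  · intro hmn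
    have : ¬ ((∀ z ∈ L, z ≠ x → z ≠ y → dist x y < dist x z) ∧
        ∀ z ∈ L, z ≠ x → z ≠ y → dist x y < dist y z) := fun h =>
      hmn ⟨hx, hy, hxy, h.1, h.2⟩
    simp only [not_and_or, not_forall, not_lt, exists_prop] at this
    rcases this with ⟨z, hz, hzx, hzy, hle⟩ | ⟨z, hz, hzx, hzy, hle⟩
    · exact ⟨_, ffMove_mk_iff.mpr ⟨hx, hy, hxy, z, hz, hzx, hzy,
        Or.inl ⟨hdist.dist_lt_of_le hx hy hz hxy hzx hzy hle, rfl⟩⟩⟩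
    · rw [dist_comm x y] at hle
      have hlt := hdist.dist_lt_of_le hy hx hz hxy.symm hzy hzx hle
      rw [dist_comm y x] at hlt
      exact ⟨_, ffMove_mk_iff.mpr ⟨hx, hy, hxy, z, hz, hzx, hzy, Or.inr ⟨hlt, rfl⟩⟩⟩

theorem IsRestrictedStable.exists_matched_le {R : Pt d → Pt d → Prop}
    (hS : IsRestrictedStable L R) {x y : Pt d} (hx : x ∈ L) (hy : y ∈ L) (hxy : x ≠ y)
    (hmn : ¬ MutuallyNearest L x y) (hnR : ¬ R x y) :
    (∃ z, R x z ∧ dist x z ≤ dist x y) ∨ ∃ z, R y z ∧ dist y z ≤ dist x y := by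
  by_contra! h
  exact hS ⟨x, hx, y, hy, hxy, hmn, hnR, h.1, h.2⟩

theorem exists_ffMove_to_matched (hdist : DistinctDist L) {R : Pt d → Pt d → Prop}
    (hM : IsMatching L R) (hS : IsRestrictedStable L R) {x y : Pt d} (hx : x ∈ L)
    (hy : y ∈ L) (hxy : x ≠ y) (hmn : ¬ MutuallyNearest L x y) (hnR : ¬ R x y) :
    ∃ u w, R u w ∧ FFMove L s(x, y) s(u, w) := by
  rcases hS.exists_matched_le hx hy hxy hmn hnR with ⟨z, hxz, hle⟩ | ⟨z, hyz, hle⟩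
  · obtain ⟨-, hz, hxz'⟩ := hM.2.1 x z hxz
    have hzy : z ≠ y := by rintro rfl; exact hnR hxz
    exact ⟨x, z, hxz, ffMove_mk_iff.mpr ⟨hx, hy, hxy, z, hz, hxz'.symm, hzy,
      Or.inl ⟨hdist.dist_lt_of_le hx hy hz hxy hxz'.symm hzy hle, rfl⟩⟩⟩
  · obtain ⟨-, hz, hyz'⟩ := hM.2.1 y z hyz
    have hzx : z ≠ x := by rintro rfl; exact hnR (hM.1 _ _ hyz)
    rw [dist_comm x y] at hle
    have hlt := hdist.dist_lt_of_le hy hx hz hxy.symm hyz'.symm hzx hle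
    rw [dist_comm y x] at hlt
    exact ⟨y, z, hyz, ffMove_mk_iff.mpr ⟨hx, hy, hxy, z, hz, hzx, hyz'.symm,
      Or.inr ⟨hlt, rfl⟩⟩⟩

def IsMisereP (L : Set (Pt d)) (P : Sym2 (Pt d) → Prop) : Prop :=
  ∀ x ∈ L, ∀ y ∈ L, x ≠ y →
    (P s(x, y) ↔ (∃ q, FFMove L s(x, y) q) ∧ ∀ q, FFMove L s(x, y) q → ¬ P q)

theorem isP_iff_matched_of_moves (hdist : DistinctDist L) {R : Pt d → Pt d → Prop}
    (hM : IsMatching L R) (hres : ∀ x y, R x y → ¬ MutuallyNearest L x y)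
    (hS : IsRestrictedStable L R) {P : Sym2 (Pt d) → Prop} (hP : IsMisereP L P) {x y : Pt d}
    (hx : x ∈ L) (hy : y ∈ L) (hxy : x ≠ y)
    (ih : ∀ u ∈ L, ∀ w ∈ L, u ≠ w → FFMove L s(x, y) s(u, w) → (P s(u, w) ↔ R u w)) :
    P s(x, y) ↔ R x y := by
  rw [hP x hx y hy hxy, exists_ffMove_iff hdist hx hy hxy]
  constructor
  · rintro ⟨hmn, hnoP⟩
    by_contra hnR
    obtain ⟨u, w, huw, hmove⟩ := exists_ffMove_to_matched hdist hM hS hx hy hxy hmn hnR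
    obtain ⟨hu, hw, hu_ne_w⟩ := hM.2.1 u w huw
    exact hnoP _ hmove ((ih u hu w hw hu_ne_w hmove).mpr huw)
  · intro hRxy
    refine ⟨hres x y hRxy, fun q hq hPq => ?_⟩
    obtain ⟨-, -, -, z, hz, hzx, hzy, ⟨-, rfl⟩ | ⟨-, rfl⟩⟩ := ffMove_mk_iff.mp hq
    · exact hzy (hM.2.2 x z y ((ih x hx z hz hzx.symm hq).mp hPq) hRxy)
    · exact hzx (hM.2.2 y z x ((ih y hy z hz hzy.symm hq).mp hPq) (hM.1 x y hRxy))

end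

/-- let `L` have distinct distances and no infinite descending chains, let
`R` be its unique stable matching subject to the restriction that mutually nearest points
cannot be matched, and let `P` be the misère P-position predicate of friendly frogs on
`L`: a terminal position is an N-position, and a nonterminal position is a P-position iff
every legal move from it leads to an N-position (this fixpoint equation determines `P`
uniquely by well-foundedness).  Then the position `{x, y}` is a P-position if and only if
`x` and `y` are matched in `R`. -/
theorem misere_ppositions_eq_restricted_matching {d : ℕ} (L : Set (Pt d))
    (hdist : DistinctDist L) (hchain : NoDescChain L)
    (R : Pt d → Pt d → Prop) (hM : IsMatching L R)
    (hres : ∀ x y, R x y → ¬ MutuallyNearest L x y) (hS : IsRestrictedStable L R)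
    (P : Sym2 (Pt d) → Prop)
    (hP : ∀ x ∈ L, ∀ y ∈ L, x ≠ y →
      (P s(x, y) ↔ (∃ q, FFMove L s(x, y) q) ∧ ∀ q, FFMove L s(x, y) q → ¬ P q)) :
    ∀ x ∈ L, ∀ y ∈ L, x ≠ y → (P s(x, y) ↔ R x y) := by
  suffices h : ∀ p, ∀ x ∈ L, ∀ y ∈ L, x ≠ y → p = s(x, y) → (P p ↔ R x y) from
    fun x hx y hy hxy => h _ x hx y hy hxy rfl
  intro p
  induction p using hchain.wellFounded_ffMove.induction with
  | _ p ih =>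
    rintro x hx y hy hxy rfl
    exact isP_iff_matched_of_moves hdist hM hres hS hP hx hy hxy
      fun u hu w hw huw hmove => ih _ hmove u hu w hw huw rfl
end
end
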